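/- Let Σ be a complete simplicial fan with rays ρ_1,…,ρ_n generated by b̄_1,…,b̄_n. Every element of the deformed group ring ℚ[N]^Σ can be written uniquely as a sum Σ_{v ∈ Box(Σ)} y^v · s_v with s_v in the subring S_Σ generated by y^{b_1},…,y^{b_n}; that is, ℚ[N]^Σ = ⊕_{v ∈ Box(Σ)} y^v · S_Σ as S_Σ-modules. -/

import Mathlib

/-!
By simpliciality and the gluing of cones, the point `bar c` of `c ∈ N` has unique
coordinates `p ≥ 0` in any cone of `Σ` containing it. Taking integer parts splits `c`
uniquely as `v + ∑ ⌊p i⌋ • b i` with `v ∈ Box(Σ)`, and the monomial `y^c` is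
`y^v · y^{∑ ⌊p i⌋ • b i}`. So every monomial lies in some `y^v · S_Σ`, and `y^v · S_Σ` is
supported on the monomials whose box part is `v`: these supports are disjoint for distinct
`v`, and filtering a sum `∑ y^v · s_v` by box part recovers each summand.
-/

/-- The (simplicial) cone in `V` spanned by the rays `w i`, `i ∈ S`. -/
def coneOf {V : Type} [AddCommGroup V] [Module ℚ V] {n : ℕ}
    (w : Fin n → V) (S : Finset (Fin n)) : Set V :=
  {x | ∃ q : Fin n → ℚ, (∀ i, 0 ≤ q i) ∧ (∀ i, i ∉ S → q i = 0) ∧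
    x = ∑ i, q i • w i}

/-- The multiplication of the deformed group ring `ℚ[N]^Σ`: on the ℚ-vector space
`⊕_{c ∈ N} ℚ·y^c = (N →₀ ℚ)` it is given on monomials by
`y^{c₁} · y^{c₂} = y^{c₁+c₂}` if `bar c₁` and `bar c₂` lie in a common cone of the
fan (with cones `coneOf w S`, `S ∈ Δ`), and `0` otherwise. -/
noncomputable def dmul {N V : Type} [AddCommGroup N] [AddCommGroup V] [Module ℚ V]
    {n : ℕ} (bar : N →+ V) (w : Fin n → V) (Δ : Finset (Finset (Fin n)))
    (f g : N →₀ ℚ) : N →₀ ℚ :=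
  open Classical in
  f.sum fun c₁ a => g.sum fun c₂ b =>
    if ∃ S ∈ Δ, bar c₁ ∈ coneOf w S ∧ bar c₂ ∈ coneOf w S then
      Finsupp.single (c₁ + c₂) (a * b)
    else 0


/-- `Box(Σ)`: the set of `v ∈ N` such that `bar v = ∑_{i ∈ S} q i • w i` with
`0 ≤ q i < 1` for some `d`-dimensional cone `S ∈ Δ`. -/
def BoxSet {N V : Type} [AddCommGroup N] [AddCommGroup V] [Module ℚ V] {n : ℕ}
    (bar : N →+ V) (w : Fin n → V) (Δ : Finset (Finset (Fin n))) (d : ℕ) : Set N :=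
  {v | ∃ S ∈ Δ, S.card = d ∧ ∃ q : Fin n → ℚ,
    (∀ i, 0 ≤ q i ∧ q i < 1) ∧ (∀ i, i ∉ S → q i = 0) ∧ bar v = ∑ i, q i • w i}

/-- The subring `S_Σ ⊆ ℚ[N]^Σ` generated by the monomials `y^{b i}`: its underlying
`ℚ`-vector space is spanned by the monomials `y^{∑ k i • b i}` whose support
`{i | k i ≠ 0}` lies in a cone of the fan. -/
noncomputable def SRing {N : Type} [AddCommGroup N] {n : ℕ}
    (b : Fin n → N) (Δ : Finset (Finset (Fin n))) : Submodule ℚ (N →₀ ℚ) :=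
  Submodule.span ℚ {f | ∃ k : Fin n → ℕ, (∃ S ∈ Δ, ∀ i, k i ≠ 0 → i ∈ S) ∧
    f = Finsupp.single (∑ i, k i • b i) 1}


section DeformedMul

variable {N V : Type} [AddCommGroup N] [AddCommGroup V] [Module ℚ V] {n : ℕ}
  (bar : N →+ V) (w : Fin n → V) (Δ : Finset (Finset (Fin n)))

open Classical in
theorem dmul_single_single (c₁ c₂ : N) (a₁ a₂ : ℚ) :
    dmul bar w Δ (Finsupp.single c₁ a₁) (Finsupp.single c₂ a₂) =
      if ∃ S ∈ Δ, bar c₁ ∈ coneOf w S ∧ bar c₂ ∈ coneOf w S then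
        Finsupp.single (c₁ + c₂) (a₁ * a₂) else 0 := by
  unfold dmul
  rw [Finsupp.sum_single_index, Finsupp.sum_single_index]
  · split <;> simp
  · rw [Finsupp.sum_single_index] <;> split <;> simp

noncomputable def dmulLeft (f : N →₀ ℚ) : (N →₀ ℚ) →ₗ[ℚ] (N →₀ ℚ) where
  toFun g := dmul bar w Δ f g
  map_add' g g' := by
    unfold dmul
    rw [← Finsupp.sum_add]
    refine Finsupp.sum_congr fun c₁ _ => ?_
    exact Finsupp.sum_add_index' (fun c₂ => by split <;> simp)
      (fun c₂ a a' => by split <;> simp [mul_add, Finsupp.single_add])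
  map_smul' r g := by
    unfold dmul
    rw [RingHom.id_apply, Finsupp.smul_sum]
    refine Finsupp.sum_congr fun c₁ _ => ?_
    rw [Finsupp.sum_smul_index (fun c₂ => by split <;> simp), Finsupp.smul_sum]
    refine Finsupp.sum_congr fun c₂ _ => ?_
    split
    · rw [Finsupp.smul_single', mul_left_comm]
    · simp

theorem dmul_zero (f : N →₀ ℚ) : dmul bar w Δ f 0 = 0 :=
  map_zero (dmulLeft bar w Δ f)

theorem dmul_add (f g g' : N →₀ ℚ) :
    dmul bar w Δ f (g + g') = dmul bar w Δ f g + dmul bar w Δ f g' :=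
  map_add (dmulLeft bar w Δ f) g g'

end DeformedMul

section Fan

variable {V : Type} [AddCommGroup V] [Module ℚ V] {n : ℕ} {w : Fin n → V}

theorem sum_smul_eq_sum_coe_sort {S : Finset (Fin n)} {q : Fin n → ℚ}
    (hq : ∀ i ∉ S, q i = 0) : ∑ i, q i • w i = ∑ i : S, q i • w i := by
  rw [Finset.sum_coe_sort S fun i => q i • w i]
  exact (Finset.sum_subset S.subset_univ fun i _ hi => by rw [hq i hi, zero_smul]).symm

theorem eq_of_sum_smul_eq {S : Finset (Fin n)} (hS : LinearIndependent ℚ fun i : S => w i.1)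
    {q q' : Fin n → ℚ} (hq : ∀ i ∉ S, q i = 0) (hq' : ∀ i ∉ S, q' i = 0)
    (h : ∑ i, q i • w i = ∑ i, q' i • w i) : q = q' := by
  rw [sum_smul_eq_sum_coe_sort hq, sum_smul_eq_sum_coe_sort hq'] at h
  funext i
  by_cases hi : i ∈ S
  · exact Fintype.linearIndependent_iffₛ.mp hS _ _ h ⟨i, hi⟩
  · rw [hq i hi, hq' i hi]

variable {Δ : Finset (Finset (Fin n))}

theorem eq_zero_of_sum_smul_mem_coneOf (hind : ∀ S ∈ Δ, LinearIndependent ℚ fun i : S => w i.1)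
    (hglue : ∀ S ∈ Δ, ∀ T ∈ Δ, coneOf w S ∩ coneOf w T = coneOf w (S ∩ T))
    {S T : Finset (Fin n)} (hS : S ∈ Δ) (hT : T ∈ Δ) {q : Fin n → ℚ}
    (hq : ∀ i, 0 ≤ q i) (hqT : ∀ i ∉ T, q i = 0)
    (hmem : ∑ i, q i • w i ∈ coneOf w S) : ∀ i ∉ S, q i = 0 := by
  have hST : ∑ i, q i • w i ∈ coneOf w (S ∩ T) := by
    rw [← hglue S hS T hT]
    exact ⟨hmem, q, hq, hqT, rfl⟩
  obtain ⟨r, -, hrST, hr⟩ := hST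
  have hrT : ∀ i ∉ T, r i = 0 := fun i hi => hrST i fun h => hi (Finset.mem_inter.mp h).2
  rw [eq_of_sum_smul_eq (hind T hT) hqT hrT hr]
  exact fun i hi => hrST i fun h => hi (Finset.mem_inter.mp h).1

theorem eq_of_sum_smul_eq_of_nonneg (hind : ∀ S ∈ Δ, LinearIndependent ℚ fun i : S => w i.1)
    (hglue : ∀ S ∈ Δ, ∀ T ∈ Δ, coneOf w S ∩ coneOf w T = coneOf w (S ∩ T))
    {S S' : Finset (Fin n)} (hS : S ∈ Δ) (hS' : S' ∈ Δ) {q q' : Fin n → ℚ}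
    (hq : ∀ i, 0 ≤ q i) (hq' : ∀ i, 0 ≤ q' i) (hqS : ∀ i ∉ S, q i = 0)
    (hqS' : ∀ i ∉ S', q' i = 0) (h : ∑ i, q i • w i = ∑ i, q' i • w i) : q = q' :=
  eq_of_sum_smul_eq (hind S' hS')
    (eq_zero_of_sum_smul_mem_coneOf hind hglue hS' hS hq hqS (h ▸ ⟨q', hq', hqS', rfl⟩))
    hqS' h

end Fan

section BoxPart

variable {N V : Type} [AddCommGroup N] [AddCommGroup V] [Module ℚ V] {n : ℕ}
  (bar : N →+ V) (b : Fin n → N) (w : Fin n → V) (Δ : Finset (Finset (Fin n))) (d : ℕ)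

/-- `y^c` occurs in a product `y^v · y^{∑ k i • b i}` with `v ∈ Box(Σ)` and
`y^{∑ k i • b i}` one of the monomials spanning `S_Σ`. -/
def IsBoxPart (v c : N) : Prop :=
  v ∈ BoxSet bar w Δ d ∧ ∃ k : Fin n → ℕ, (∃ S ∈ Δ, ∀ i, k i ≠ 0 → i ∈ S) ∧
    (∃ S ∈ Δ, bar v ∈ coneOf w S ∧ bar (∑ i, k i • b i) ∈ coneOf w S) ∧
    c = v + ∑ i, k i • b i

variable {bar b w Δ d}

theorem map_sum_nsmul_eq (hw : w = fun i => bar (b i)) (k : Fin n → ℕ) :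
    bar (∑ i, k i • b i) = ∑ i, (k i : ℚ) • w i := by
  simp [map_sum, map_nsmul, hw, Nat.cast_smul_eq_nsmul]

theorem exists_isBoxPart (hw : w = fun i => bar (b i))
    (hcomplete : ∀ x : V, ∃ S ∈ Δ, x ∈ coneOf w S)
    (hmax : ∀ S ∈ Δ, ∃ T ∈ Δ, S ⊆ T ∧ T.card = d) (c : N) :
    ∃ v, IsBoxPart bar b w Δ d v c := by
  obtain ⟨S, hS, q, hq, hqS, hc⟩ := hcomplete (bar c)
  obtain ⟨T, hT, hST, hTd⟩ := hmax S hS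
  have hqT : ∀ i ∉ T, q i = 0 := fun i hi => hqS i fun h => hi (hST h)
  set k : Fin n → ℕ := fun i => ⌊q i⌋₊
  have hkT : ∀ i ∉ T, k i = 0 := fun i hi => by simp [k, hqT i hi]
  have hfract : ∀ i, 0 ≤ q i - k i ∧ q i - k i < 1 := fun i =>
    ⟨sub_nonneg.2 (Nat.floor_le (hq i)), sub_lt_iff_lt_add'.2 (Nat.lt_floor_add_one _)⟩
  have hfractT : ∀ i ∉ T, q i - k i = 0 := fun i hi => by rw [hqT i hi, hkT i hi]; simp
  have hv : bar (c - ∑ i, k i • b i) = ∑ i, (q i - k i) • w i := by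
    rw [map_sub, hc, map_sum_nsmul_eq hw, ← Finset.sum_sub_distrib]
    simp_rw [sub_smul]
  refine ⟨c - ∑ i, k i • b i, ⟨T, hT, hTd, _, hfract, hfractT, hv⟩, k,
    ⟨T, hT, fun i => not_imp_comm.1 (hkT i)⟩,
    ⟨T, hT, ⟨_, fun i => (hfract i).1, hfractT, hv⟩,
      ⟨_, fun i => Nat.cast_nonneg _, fun i hi => by simp [hkT i hi], map_sum_nsmul_eq hw k⟩⟩,
    (sub_add_cancel _ _).symm⟩

theorem IsBoxPart.exists_fract_floor (hw : w = fun i => bar (b i))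
    (hind : ∀ S ∈ Δ, LinearIndependent ℚ fun i : S => w i.1)
    (hglue : ∀ S ∈ Δ, ∀ T ∈ Δ, coneOf w S ∩ coneOf w T = coneOf w (S ∩ T))
    {v c : N} (h : IsBoxPart bar b w Δ d v c) :
    ∃ S ∈ Δ, ∃ q : Fin n → ℚ, ∃ k : Fin n → ℕ, (∀ i, 0 ≤ q i ∧ q i < 1) ∧
      (∀ i ∉ S, q i = 0 ∧ k i = 0) ∧ bar c = ∑ i, (q i + k i) • w i ∧
      v = c - ∑ i, k i • b i := by
  obtain ⟨⟨T, hT, -, q, hq, hqT, hv⟩, k, ⟨S', hS', hkS'⟩, ⟨S, hS, hvS, hkS⟩, rfl⟩ := h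
  have hqS : ∀ i ∉ S, q i = 0 :=
    eq_zero_of_sum_smul_mem_coneOf hind hglue hS hT (fun i => (hq i).1) hqT (hv ▸ hvS)
  have hkS : ∀ i ∉ S, (k i : ℚ) = 0 :=
    eq_zero_of_sum_smul_mem_coneOf hind hglue hS hS' (fun i => Nat.cast_nonneg _)
      (fun i hi => by simpa using not_imp_comm.1 (hkS' i) hi)
      (map_sum_nsmul_eq hw k ▸ hkS)
  refine ⟨S, hS, q, k, hq, fun i hi => ⟨hqS i hi, by exact_mod_cast hkS i hi⟩, ?_,
    (add_sub_cancel_right _ _).symm⟩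
  rw [map_add, hv, map_sum_nsmul_eq hw, ← Finset.sum_add_distrib]
  simp_rw [add_smul]

theorem IsBoxPart.unique (hw : w = fun i => bar (b i))
    (hind : ∀ S ∈ Δ, LinearIndependent ℚ fun i : S => w i.1)
    (hglue : ∀ S ∈ Δ, ∀ T ∈ Δ, coneOf w S ∩ coneOf w T = coneOf w (S ∩ T))
    {v v' c : N} (h : IsBoxPart bar b w Δ d v c) (h' : IsBoxPart bar b w Δ d v' c) :
    v = v' := by
  obtain ⟨S, hS, q, k, hq, hqkS, hc, rfl⟩ := h.exists_fract_floor hw hind hglue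
  obtain ⟨S', hS', q', k', hq', hqkS', hc', rfl⟩ := h'.exists_fract_floor hw hind hglue
  have hcoord : (fun i => q i + (k i : ℚ)) = fun i => q' i + k' i :=
    eq_of_sum_smul_eq_of_nonneg hind hglue hS hS'
      (fun i => add_nonneg (hq i).1 (Nat.cast_nonneg _))
      (fun i => add_nonneg (hq' i).1 (Nat.cast_nonneg _))
      (fun i hi => by simp [hqkS i hi]) (fun i hi => by simp [hqkS' i hi]) (hc.symm.trans hc')
  have floor_add : ∀ (r : ℚ) (m : ℕ), 0 ≤ r ∧ r < 1 → ⌊r + m⌋₊ = m := fun r m hr => by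
    rw [Nat.floor_add_natCast hr.1, Nat.floor_eq_zero.2 hr.2, zero_add]
  have hk : k = k' := funext fun i => by
    rw [← floor_add _ (k i) (hq i), congrFun hcoord i, floor_add _ _ (hq' i)]
  rw [hk]

end BoxPart

section Decomposition

variable {N V : Type} [AddCommGroup N] [AddCommGroup V] [Module ℚ V] {n d : ℕ}
  {bar : N →+ V} {b : Fin n → N} {w : Fin n → V} {Δ : Finset (Finset (Fin n))}

theorem single_sum_nsmul_mem_SRing {k : Fin n → ℕ} (hk : ∃ S ∈ Δ, ∀ i, k i ≠ 0 → i ∈ S)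
    (a : ℚ) : Finsupp.single (∑ i, k i • b i) a ∈ SRing b Δ := by
  rw [← mul_one a, ← Finsupp.smul_single']
  exact Submodule.smul_mem _ _ (Submodule.subset_span ⟨k, hk, rfl⟩)

theorem dmul_single_mem_supported {v : N} (hv : v ∈ BoxSet bar w Δ d) {t : N →₀ ℚ}
    (ht : t ∈ SRing b Δ) :
    dmul bar w Δ (Finsupp.single v 1) t ∈
      Finsupp.supported ℚ ℚ {c | IsBoxPart bar b w Δ d v c} := by
  classical
  refine (Submodule.span_le (p := (Finsupp.supported ℚ ℚ _).comap
    (dmulLeft bar w Δ (Finsupp.single v 1)))).2 ?_ ht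
  rintro _ ⟨k, hk, rfl⟩
  change dmul bar w Δ _ _ ∈ Finsupp.supported ℚ ℚ _
  rw [dmul_single_single]
  split_ifs with hcone
  · exact Finsupp.single_mem_supported ℚ _ ⟨hv, k, hk, hcone, rfl⟩
  · exact zero_mem _

theorem exists_sum_dmul_single_eq (hw : w = fun i => bar (b i))
    (hcomplete : ∀ x : V, ∃ S ∈ Δ, x ∈ coneOf w S)
    (hmax : ∀ S ∈ Δ, ∃ T ∈ Δ, S ⊆ T ∧ T.card = d) (f : N →₀ ℚ) :
    ∃ s : BoxSet bar w Δ d →₀ (N →₀ ℚ), (∀ v, s v ∈ SRing b Δ) ∧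
      f = s.sum fun v t => dmul bar w Δ (Finsupp.single (v : N) 1) t := by
  classical
  induction f using Finsupp.induction_linear with
  | zero => exact ⟨0, fun _ => zero_mem (SRing b Δ), by simp⟩
  | add f g hf hg =>
    obtain ⟨s, hs, rfl⟩ := hf
    obtain ⟨s', hs', rfl⟩ := hg
    refine ⟨s + s', fun v => add_mem (hs v) (hs' v), ?_⟩
    rw [Finsupp.sum_add_index' (fun v => dmul_zero bar w Δ _) (fun v => dmul_add bar w Δ _)]
  | single c a =>
    obtain ⟨v, hv, k, hk, hcone, rfl⟩ := exists_isBoxPart (b := b) hw hcomplete hmax c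
    refine ⟨Finsupp.single ⟨v, hv⟩ (Finsupp.single (∑ i, k i • b i) a), fun v' => ?_, ?_⟩
    · rw [Finsupp.single_apply]
      split_ifs
      exacts [single_sum_nsmul_mem_SRing hk a, zero_mem _]
    · rw [Finsupp.sum_single_index
        (h := fun (v : BoxSet bar w Δ d) t => dmul bar w Δ (Finsupp.single (v : N) 1) t)
        (dmul_zero bar w Δ _), dmul_single_single, if_pos hcone, one_mul]

open Classical in
theorem filter_isBoxPart_sum_dmul_single (hw : w = fun i => bar (b i))
    (hind : ∀ S ∈ Δ, LinearIndependent ℚ fun i : S => w i.1)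
    (hglue : ∀ S ∈ Δ, ∀ T ∈ Δ, coneOf w S ∩ coneOf w T = coneOf w (S ∩ T))
    {s : BoxSet bar w Δ d →₀ (N →₀ ℚ)} (hs : ∀ v, s v ∈ SRing b Δ) (v : BoxSet bar w Δ d) :
    (s.sum fun v t => dmul bar w Δ (Finsupp.single (v : N) 1) t).filter
      (IsBoxPart bar b w Δ d v) = dmul bar w Δ (Finsupp.single (v : N) 1) (s v) := by
  have hsupp : ∀ (v' : BoxSet bar w Δ d) c,
      dmul bar w Δ (Finsupp.single (v' : N) 1) (s v') c ≠ 0 → IsBoxPart bar b w Δ d v' c :=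
    fun v' c hc => not_imp_comm.1
      ((Finsupp.mem_supported' _ _).1 (dmul_single_mem_supported v'.2 (hs v')) c) hc
  rw [Finsupp.sum, Finsupp.filter_sum, Finset.sum_eq_single v]
  · exact (Finsupp.filter_eq_self_iff _ _).2 (hsupp v)
  · refine fun v' _ hne => (Finsupp.filter_eq_zero_iff _ _).2 fun c hc => ?_
    by_contra h'
    exact hne (Subtype.ext ((hsupp v' c h').unique hw hind hglue hc))
  · intro hv
    rw [Finsupp.notMem_support_iff.1 hv, dmul_zero, Finsupp.filter_zero]

end Decomposition

theorem stmt_9_general (N V : Type) [AddCommGroup N] [AddCommGroup V] [Module ℚ V]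
    (n d : ℕ) (bar : N →+ V) (b : Fin n → N) (w : Fin n → V)
    (hw : w = fun i => bar (b i))
    (Δ : Finset (Finset (Fin n)))
    (hind : ∀ S ∈ Δ, LinearIndependent ℚ fun i : S => w i.1)
    (hglue : ∀ S ∈ Δ, ∀ T ∈ Δ, coneOf w S ∩ coneOf w T = coneOf w (S ∩ T))
    (hcomplete : ∀ x : V, ∃ S ∈ Δ, x ∈ coneOf w S)
    (hmax : ∀ S ∈ Δ, ∃ T ∈ Δ, S ⊆ T ∧ T.card = d) :
    (∀ f : N →₀ ℚ, ∃ s : ↥(BoxSet bar w Δ d) →₀ (N →₀ ℚ),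
        (∀ v : ↥(BoxSet bar w Δ d), s v ∈ SRing b Δ) ∧
        f = s.sum fun v t => dmul bar w Δ (Finsupp.single (v : N) 1) t) ∧
    (∀ s s' : ↥(BoxSet bar w Δ d) →₀ (N →₀ ℚ),
        (∀ v : ↥(BoxSet bar w Δ d), s v ∈ SRing b Δ) → (∀ v : ↥(BoxSet bar w Δ d), s' v ∈ SRing b Δ) →
        (s.sum fun v t => dmul bar w Δ (Finsupp.single (v : N) 1) t) =
          (s'.sum fun v t => dmul bar w Δ (Finsupp.single (v : N) 1) t) →
        ∀ v : ↥(BoxSet bar w Δ d), dmul bar w Δ (Finsupp.single (v : N) 1) (s v) =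
          dmul bar w Δ (Finsupp.single (v : N) 1) (s' v)) := by
  refine ⟨exists_sum_dmul_single_eq hw hcomplete hmax, fun s s' hs hs' h v => ?_⟩
  rw [← filter_isBoxPart_sum_dmul_single hw hind hglue hs,
    ← filter_isBoxPart_sum_dmul_single hw hind hglue hs', h]

/-- **`ℚ[N]^Σ = ⊕_{v ∈ Box(Σ)} y^v · S_Σ`.**  Let `Σ` be a complete simplicial fan
in the `d`-dimensional space `N_ℚ` with rays `w i = bar (b i)`.  Every element of
the deformed group ring can be written as `∑_{v ∈ Box(Σ)} y^v · s_v` with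
`s_v ∈ S_Σ`, and the components `y^v · s_v` of such a decomposition are unique. -/
theorem stmt_9 (N V : Type) [AddCommGroup N] [AddCommGroup V] [Module ℚ V]
    (n d : ℕ) (bar : N →+ V) (b : Fin n → N) (w : Fin n → V)
    (hw : w = fun i => bar (b i))
    (Δ : Finset (Finset (Fin n)))
    (hind : ∀ S ∈ Δ, LinearIndependent ℚ fun i : S => w i.1)
    (hdown : ∀ S ∈ Δ, ∀ T ⊆ S, T ∈ Δ)
    (hglue : ∀ S ∈ Δ, ∀ T ∈ Δ, coneOf w S ∩ coneOf w T = coneOf w (S ∩ T))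
    (hcomplete : ∀ x : V, ∃ S ∈ Δ, x ∈ coneOf w S)
    (hdim : Module.finrank ℚ V = d)
    (hmax : ∀ S ∈ Δ, ∃ T ∈ Δ, S ⊆ T ∧ T.card = d) :
    (∀ f : N →₀ ℚ, ∃ s : ↥(BoxSet bar w Δ d) →₀ (N →₀ ℚ),
        (∀ v : ↥(BoxSet bar w Δ d), s v ∈ SRing b Δ) ∧
        f = s.sum fun v t => dmul bar w Δ (Finsupp.single (v : N) 1) t) ∧
    (∀ s s' : ↥(BoxSet bar w Δ d) →₀ (N →₀ ℚ),
        (∀ v : ↥(BoxSet bar w Δ d), s v ∈ SRing b Δ) → (∀ v : ↥(BoxSet bar w Δ d), s' v ∈ SRing b Δ) →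
        (s.sum fun v t => dmul bar w Δ (Finsupp.single (v : N) 1) t) =
          (s'.sum fun v t => dmul bar w Δ (Finsupp.single (v : N) 1) t) →
        ∀ v : ↥(BoxSet bar w Δ d), dmul bar w Δ (Finsupp.single (v : N) 1) (s v) =
          dmul bar w Δ (Finsupp.single (v : N) 1) (s' v)) :=
  stmt_9_general N V n d bar b w hw Δ hind hglue hcomplete hmax
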